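/- arXiv:1905.00189 — 11 statements merged into one kernel-verified Lean document; each statement's English description precedes it below -/
import Mathlib

section
/- The local update map F_{J,K} is an involution: for any a in {0,...,J} and b in {0,...,K}, F_{J,K}(F_{J,K}(a,b)) = (a,b). -/
/-- First component of the BBS(J,K) local update map. -/
def F1 (J K a b : ℤ) : ℤ := a + min b (J - a) - min a (K - b)

/-- Second component of the BBS(J,K) local update map. -/
def F2 (J K a b : ℤ) : ℤ := b - min b (J - a) + min a (K - b)

theorem F_involution (J K a b : ℤ) (hJ : 0 < J) (hK : 0 < K)
    (ha0 : 0 ≤ a) (haJ : a ≤ J) (hb0 : 0 ≤ b) (hbK : b ≤ K) :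
    F1 J K (F1 J K a b) (F2 J K a b) = a ∧ F2 J K (F1 J K a b) (F2 J K a b) = b := by
  simp only [F1, F2]
  rcases le_total b (J - a) with h1 | h1 <;> rcases le_total a (K - b) with h2 | h2 <;>
    simp only [min_eq_left h1, min_eq_right h1, min_eq_left h2, min_eq_right h2] <;>
    constructor <;>
    · rw [min_def, min_def]; split_ifs <;> omega
end

section
/- Reducibility: if min{J,K} > 2r for some r ∈ ℕ, then for any (a,b) ∈ {r,...,J-r} × {r,...,K-r}, F_{J-2r,K-2r}(a-r, b-r) = (F^{(1)}_{J,K}(a,b) - r, F^{(2)}_{J,K}(a,b) - r). -/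
theorem F_reducibility (J K r a b : ℤ) (hr : 0 ≤ r) (hmin : 2 * r < min J K)
    (har : r ≤ a) (haJ : a ≤ J - r) (hbr : r ≤ b) (hbK : b ≤ K - r) :
    F1 (J - 2 * r) (K - 2 * r) (a - r) (b - r) = F1 J K a b - r ∧
    F2 (J - 2 * r) (K - 2 * r) (a - r) (b - r) = F2 J K a b - r := by
  unfold F1 F2
  omega
end

section
/- Empty box-ball duality: if J,K < ∞, then (σ_J × σ_K) ∘ F_{J,K} = F_{J,K} ∘ (σ_J × σ_K), where σ_J(a) = J - a and σ_K(b) = K - b; i.e., for all a ∈ {0,...,J}, b ∈ {0,...,K}, F^{(1)}_{J,K}(J-a, K-b) = J - F^{(1)}_{J,K}(a,b) and F^{(2)}_{J,K}(J-a, K-b) = K - F^{(2)}_{J,K}(a,b). -/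
theorem F_empty_box_ball_duality (J K a b : ℤ) (hJ : 0 < J) (hK : 0 < K)
    (ha0 : 0 ≤ a) (haJ : a ≤ J) (hb0 : 0 ≤ b) (hbK : b ≤ K) :
    F1 J K (J - a) (K - b) = J - F1 J K a b ∧
    F2 J K (J - a) (K - b) = K - F2 J K a b := by
  unfold F1 F2
  constructor <;> rcases le_total b (J-a) with h1|h1 <;> rcases le_total a (K-b) with h2|h2 <;>
    simp only [min_def] <;> split_ifs <;> omega
end

section
/- Suppose J > K, Y is a carrier for η, and for some index n, η_n ∈ {r,...,J-r} for some r ∈ {0,...,⌊J/2⌋} and min{Y_n, K-Y_n} < r. Then min{Y_{n-1}, K-Y_{n-1}} ≤ min{Y_n, K-Y_n}; moreover Y_{n-1} = Y_n holds if and only if Y_{n-1} = Y_n = K/2. -/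
theorem carrier_min_monotone (J K r a b : ℤ) (hK : 0 < K) (hJK : K < J)
    (hr0 : 0 ≤ r) (hrJ : 2 * r ≤ J)
    (har : r ≤ a) (haJ : a ≤ J - r)
    (hb0 : 0 ≤ b) (hbK : b ≤ K)
    (hsmall : min (F2 J K a b) (K - F2 J K a b) < r) :
    min b (K - b) ≤ min (F2 J K a b) (K - F2 J K a b) ∧
    (b = F2 J K a b ↔ b = F2 J K a b ∧ 2 * b = K) := by
  simp only [F2, min_def] at *
  split_ifs at * <;> omega
end

section
/- Path-encoding characterization of carriers: suppose J < K (possibly K = ∞). Let η ∈ {0,...,J}^ℤ with path encoding S defined by S_0 = 0 and S_n - S_{n-1} = J - 2η_n, and let S̃_n = (S_{n-1} + S_n)/2. Then Y ∈ {0,...,K}^ℤ is a carrier for η (i.e., Y_n = F^{(2)}_{J,K}(η_n, Y_{n-1}) for all n) if and only if M_n := Y_n + S_n - J/2 satisfies M_n = min{max{M_{n-1}, S̃_n}, S̃_n + K - J} for all n ∈ ℤ. -/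
theorem carrier_path_encoding (J K : ℤ) (hJ : 0 < J) (hJK : J < K)
    (η S Y : ℤ → ℤ)
    (hη : ∀ n, 0 ≤ η n ∧ η n ≤ J)
    (hS0 : S 0 = 0)
    (hSinc : ∀ n, S n - S (n - 1) = J - 2 * η n)
    (hY : ∀ n, 0 ≤ Y n ∧ Y n ≤ K) :
    (∀ n, Y n = F2 J K (η n) (Y (n - 1))) ↔
      (∀ n, 2 * Y n + 2 * S n - J =
        min (max (2 * Y (n - 1) + 2 * S (n - 1) - J) (S (n - 1) + S n))
          (S (n - 1) + S n + 2 * (K - J))) := by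
  constructor <;> intro h n <;>
    have h1 := hη n <;> have h2 := hY (n - 1) <;> have h3 := hSinc n <;>
    have h4 := h n <;> simp only [F2] at h4 ⊢ <;> omega
end

section
/- Pitman-type transformation: suppose J < K, η has a carrier Y with associated M_n = Y_n + S_n - J/2 (S the path encoding of η). Then the path encoding T^Y S of the updated configuration T^Y η, defined by (T^Y η)_n = F^{(1)}_{J,K}(η_n, Y_{n-1}), satisfies T^Y S = 2M - S - 2M_0, i.e., (T^Y S)_n = 2M_n - S_n - 2M_0 for all n ∈ ℤ. -/
/-!
The local update conserves mass, `F1 a b + F2 a b = a + b`, so the updated configuration is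
`(T^Y η)_n = η_n + Y_{n-1} - Y_n`. Its path increments are therefore those of `S + 2Y`, and
`T^Y S - S - 2Y` is constant, equal to its value `-2 Y_0` at `n = 0`.
-/

theorem F1_add_F2 (J K a b : ℤ) : F1 J K a b + F2 J K a b = a + b := by
  unfold F1 F2
  ring

theorem Int.apply_eq_apply_zero_of_forall_eq_sub_one {α : Type*} {f : ℤ → α}
    (h : ∀ n, f n = f (n - 1)) (n : ℤ) : f n = f 0 := by
  have hper : Function.Periodic f 1 := fun x => by rw [h (x + 1), add_sub_cancel_right]
  simpa using hper.int_mul_eq n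

theorem pitman_transformation_general (J K : ℤ)
    (η S Y TS : ℤ → ℤ)
    (hS0 : S 0 = 0)
    (hSinc : ∀ n, S n - S (n - 1) = J - 2 * η n)
    (hcar : ∀ n, Y n = F2 J K (η n) (Y (n - 1)))
    (hTS0 : TS 0 = 0)
    (hTSinc : ∀ n, TS n - TS (n - 1) = J - 2 * F1 J K (η n) (Y (n - 1))) :
    ∀ n, TS n = (2 * Y n + 2 * S n - J) - S n - (2 * Y 0 + 2 * S 0 - J) := by
  have hupdate (n : ℤ) : F1 J K (η n) (Y (n - 1)) = η n + Y (n - 1) - Y n := by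
    linarith [F1_add_F2 J K (η n) (Y (n - 1)), hcar n]
  have hconst (n : ℤ) : TS n - S n - 2 * Y n = TS 0 - S 0 - 2 * Y 0 :=
    Int.apply_eq_apply_zero_of_forall_eq_sub_one (f := fun m => TS m - S m - 2 * Y m)
      (fun m => by linarith [hTSinc m, hSinc m, hupdate m]) n
  intro n
  linarith [hconst n]

theorem pitman_transformation (J K : ℤ) (hJ : 0 < J) (hJK : J < K)
    (η S Y TS : ℤ → ℤ)
    (hη : ∀ n, 0 ≤ η n ∧ η n ≤ J)
    (hS0 : S 0 = 0)
    (hSinc : ∀ n, S n - S (n - 1) = J - 2 * η n)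
    (hY : ∀ n, 0 ≤ Y n ∧ Y n ≤ K)
    (hcar : ∀ n, Y n = F2 J K (η n) (Y (n - 1)))
    (hTS0 : TS 0 = 0)
    (hTSinc : ∀ n, TS n - TS (n - 1) = J - 2 * F1 J K (η n) (Y (n - 1))) :
    ∀ n, TS n = (2 * Y n + 2 * S n - J) - S n - (2 * Y 0 + 2 * S 0 - J) :=
  pitman_transformation_general J K η S Y TS hS0 hSinc hcar hTS0 hTSinc
end

section
/- Fluctuation lemma: suppose J < K < ∞, Y is a carrier for η with M_n = Y_n + S_n - J/2, and there exist n < N with |S̃_N - S̃_n| > K - J and |S̃_m - S̃_n| ≤ K - J for all m ∈ {n,...,N-1}. Then (a) M_N ≠ M_{N-1}; (b) if S̃_N - S̃_n > K - J then M_N = S̃_N; (c) if S̃_N - S̃_n < -(K-J) then M_N = S̃_N + K - J. -/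
open Set

def clampWindow (t c x : ℤ) : ℤ := min (max x t) (t + c)

theorem clampWindow_mem_Icc {t c x lo hi : ℤ} (hx : x ∈ Icc lo hi) (hhi : t ≤ hi)
    (hlo : lo ≤ t + c) : clampWindow t c x ∈ Icc lo hi := by
  obtain ⟨hxlo, hxhi⟩ := hx
  unfold clampWindow
  constructor <;> omega

theorem clampWindow_mem_window {t c : ℤ} (hc : 0 ≤ c) (x : ℤ) :
    clampWindow t c x ∈ Icc t (t + c) := by
  unfold clampWindow
  constructor <;> omega

theorem clampWindow_of_lt {t c x : ℤ} (hc : 0 ≤ c) (h : x < t) : clampWindow t c x = t := by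
  unfold clampWindow
  omega

theorem clampWindow_of_gt {t c x : ℤ} (h : t + c < x) :
    clampWindow t c x = t + c := by
  unfold clampWindow
  omega

section Trajectory

variable {T M : ℤ → ℤ} {c : ℤ}

theorem mem_Icc_of_forall_abs_sub_le (hc : 0 ≤ c)
    (hM : ∀ m, M m = clampWindow (T m) c (M (m - 1))) {n N : ℤ}
    (hclose : ∀ m, n ≤ m → m ≤ N → |T m - T n| ≤ c) :
    ∀ m, n ≤ m → m ≤ N → M m ∈ Icc (T n) (T n + c) := by
  intro m hnm
  induction m, hnm using Int.leInduction with
  | base =>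
    intro _
    rw [hM n]
    exact clampWindow_mem_window hc _
  | succ m hnm ih =>
    intro hmN
    obtain ⟨hlo, hhi⟩ := abs_le.mp (hclose (m + 1) (by omega) hmN)
    rw [hM (m + 1), add_sub_cancel_right]
    exact clampWindow_mem_Icc (ih (by omega)) (by linarith) (by linarith)

theorem eq_and_lt_of_exit_above (hc : 0 ≤ c)
    (hM : ∀ m, M m = clampWindow (T m) c (M (m - 1))) {a N : ℤ}
    (hprev : M (N - 1) ∈ Icc a (a + c)) (hexit : a + c < T N) :
    M N = T N ∧ M (N - 1) < M N := by
  have hM_N : M N = T N := by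
    rw [hM N]
    exact clampWindow_of_lt hc (by linarith [hprev.2])
  exact ⟨hM_N, by linarith [hprev.2]⟩

theorem eq_and_lt_of_exit_below (hM : ∀ m, M m = clampWindow (T m) c (M (m - 1))) {a N : ℤ}
    (hprev : M (N - 1) ∈ Icc a (a + c)) (hexit : T N < a - c) :
    M N = T N + c ∧ M N < M (N - 1) := by
  have hM_N : M N = T N + c := by
    rw [hM N]
    exact clampWindow_of_gt (by linarith [hprev.1])
  exact ⟨hM_N, by linarith [hprev.1]⟩

end Trajectory

theorem fluctuation_lemma_general (J K : ℤ) (hJK : J < K)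
    (S M2 : ℤ → ℤ)
    (hrec : ∀ n, M2 n =
      min (max (M2 (n - 1)) (S (n - 1) + S n)) (S (n - 1) + S n + 2 * (K - J)))
    (n N : ℤ) (hnN : n < N)
    (hbig : |(S (N - 1) + S N) - (S (n - 1) + S n)| > 2 * (K - J))
    (hsmall : ∀ m, n ≤ m → m ≤ N - 1 →
      |(S (m - 1) + S m) - (S (n - 1) + S n)| ≤ 2 * (K - J)) :
    M2 N ≠ M2 (N - 1) ∧
    ((S (N - 1) + S N) - (S (n - 1) + S n) > 2 * (K - J) → M2 N = S (N - 1) + S N) ∧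
    ((S (N - 1) + S N) - (S (n - 1) + S n) < -(2 * (K - J)) →
      M2 N = S (N - 1) + S N + 2 * (K - J)) := by
  have hc : 0 ≤ 2 * (K - J) := by omega
  have hM : ∀ m, M2 m = clampWindow (S (m - 1) + S m) (2 * (K - J)) (M2 (m - 1)) := hrec
  have hprev := mem_Icc_of_forall_abs_sub_le hc hM hsmall (N - 1) (by omega) le_rfl
  have hup (h : S (N - 1) + S N - (S (n - 1) + S n) > 2 * (K - J)) :=
    eq_and_lt_of_exit_above hc hM hprev (by linarith)
  have hdown (h : S (N - 1) + S N - (S (n - 1) + S n) < -(2 * (K - J))) :=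
    eq_and_lt_of_exit_below hM hprev (by linarith)
  refine ⟨?_, fun h => (hup h).1, fun h => (hdown h).1⟩
  rcases lt_abs.mp hbig with h | h
  · exact (hup h).2.ne'
  · exact (hdown (by linarith)).2.ne

theorem fluctuation_lemma (J K : ℤ) (hJ : 0 < J) (hJK : J < K)
    (η S M2 : ℤ → ℤ)
    (hη : ∀ n, 0 ≤ η n ∧ η n ≤ J)
    (hS0 : S 0 = 0)
    (hSinc : ∀ n, S n - S (n - 1) = J - 2 * η n)
    (hrec : ∀ n, M2 n =
      min (max (M2 (n - 1)) (S (n - 1) + S n)) (S (n - 1) + S n + 2 * (K - J)))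
    (hbound : ∀ n, S (n - 1) + S n ≤ M2 n ∧ M2 n ≤ S (n - 1) + S n + 2 * (K - J))
    (n N : ℤ) (hnN : n < N)
    (hbig : |(S (N - 1) + S N) - (S (n - 1) + S n)| > 2 * (K - J))
    (hsmall : ∀ m, n ≤ m → m ≤ N - 1 →
      |(S (m - 1) + S m) - (S (n - 1) + S n)| ≤ 2 * (K - J)) :
    M2 N ≠ M2 (N - 1) ∧
    ((S (N - 1) + S N) - (S (n - 1) + S n) > 2 * (K - J) → M2 N = S (N - 1) + S N) ∧
    ((S (N - 1) + S N) - (S (n - 1) + S n) < -(2 * (K - J)) →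
      M2 N = S (N - 1) + S N + 2 * (K - J)) :=
  fluctuation_lemma_general J K hJK S M2 hrec n N hnN hbig hsmall
end

section
/- Detailed balance for geometric measures: suppose J ≠ K (both finite), α ∈ (0,∞), and let μ on {0,...,J} and ν on {0,...,K} be the truncated geometric distributions μ(a) = C_J α^a, ν(b) = C_K α^b (with normalizing constants C_J, C_K). Then μ × ν ∘ F_{J,K}^{-1} = μ × ν, i.e., for all a ∈ {0,...,J}, b ∈ {0,...,K}: μ(F^{(1)}_{J,K}(a,b)) ν(F^{(2)}_{J,K}(a,b)) = μ(a) ν(b). -/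
theorem detailed_balance_geometric (J K : ℤ) (hJ : 0 < J) (hK : 0 < K) (hne : J ≠ K)
    (α : ℝ) (hα : 0 < α) (CJ CK : ℝ)
    (μ ν : ℤ → ℝ)
    (hμ : ∀ a, μ a = CJ * α ^ a)
    (hν : ∀ b, ν b = CK * α ^ b) :
    ∀ a b, 0 ≤ a → a ≤ J → 0 ≤ b → b ≤ K →
      μ (F1 J K a b) * ν (F2 J K a b) = μ a * ν b := by
  intro a b _ _ _ _
  have hα0 : α ≠ 0 := ne_of_gt hα
  have hsum : F1 J K a b + F2 J K a b = a + b := by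
    simp [F1, F2]
  rw [hμ, hν, hμ, hν]
  have : α ^ F1 J K a b * α ^ F2 J K a b = α ^ a * α ^ b := by
    rw [← zpow_add₀ hα0, ← zpow_add₀ hα0, hsum]
  calc CJ * α ^ F1 J K a b * (CK * α ^ F2 J K a b)
      = CJ * CK * (α ^ F1 J K a b * α ^ F2 J K a b) := by ring
    _ = CJ * CK * (α ^ a * α ^ b) := by rw [this]
    _ = CJ * α ^ a * (CK * α ^ b) := by ring
end

section
/- Functional equation forcing geometric form: suppose J < K are positive integers with K - J ≥ 2, and ν : {0,...,K} → (0,∞) satisfies ν(J-a)ν(a+c) = ν(a)ν(J-a+c) for all a ∈ {0,...,J} and c ∈ {0,...,K-J}. Define ℓ_a = ν(a+1)/ν(a). Then ℓ_{a+c-1} = ℓ_{J-a+c-1} for all a ∈ {0,...,J} and c ∈ {1,...,K-J}; consequently ℓ_a = ℓ_{a+2} for all a ∈ {0,...,K-3}. -/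
theorem functional_equation_geometric (J K : ℤ) (hJ : 0 < J) (hJK : J < K)
    (hgap : 2 ≤ K - J)
    (ν : ℤ → ℝ)
    (hpos : ∀ a, 0 ≤ a → a ≤ K → 0 < ν a)
    (hfe : ∀ a c, 0 ≤ a → a ≤ J → 0 ≤ c → c ≤ K - J →
      ν (J - a) * ν (a + c) = ν a * ν (J - a + c)) :
    (∀ a c, 0 ≤ a → a ≤ J → 1 ≤ c → c ≤ K - J →
      ν (a + c) / ν (a + c - 1) = ν (J - a + c) / ν (J - a + c - 1)) ∧
    (∀ a, 0 ≤ a → a ≤ K - 3 → ν (a + 1) / ν a = ν (a + 3) / ν (a + 2)) := by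
  have key : ∀ a c, 0 ≤ a → a ≤ J → 1 ≤ c → c ≤ K - J →
      ν (a + c) / ν (a + c - 1) = ν (J - a + c) / ν (J - a + c - 1) := by
    intro a c ha haJ hc hcK
    have h1 := hfe a c ha haJ (by linarith) hcK
    have h2 := hfe a (c - 1) ha haJ (by linarith) (by linarith)
    have pJa : 0 < ν (J - a) := hpos _ (by linarith) (by linarith)
    have p1 : 0 < ν (a + c - 1) := hpos _ (by linarith) (by linarith)
    have p2 : 0 < ν (J - a + c - 1) := hpos _ (by linarith) (by linarith)
    have h2' : ν (J - a) * ν (a + c - 1) = ν a * ν (J - a + c - 1) := by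
      rw [show a + c - 1 = a + (c - 1) by ring, show J - a + c - 1 = J - a + (c - 1) by ring]
      exact h2
    rw [div_eq_div_iff (ne_of_gt p1) (ne_of_gt p2)]
    have hmul : ν (J - a) * (ν (a + c) * ν (J - a + c - 1)) =
        ν (J - a) * (ν (J - a + c) * ν (a + c - 1)) := by
      linear_combination ν (J - a + c - 1) * h1 - ν (J - a + c) * h2'
    exact mul_left_cancel₀ (ne_of_gt pJa) hmul
  refine ⟨key, ?_⟩
  intro a ha haK
  set α := max 0 (a - (K - J - 2)) with hαdef
  have hα0 : (0 : ℤ) ≤ α := le_max_left _ _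
  have hαa : α ≤ a := max_le ha (by linarith)
  have hαJ : α ≤ J - 1 := max_le (by linarith) (by linarith)
  have hge : a - α ≤ K - J - 2 := by
    have := le_max_right 0 (a - (K - J - 2))
    linarith [this.trans_eq hαdef.symm]
  have e1 := key α (a - α + 1) hα0 (by linarith) (by linarith) (by linarith)
  have e2 := key (α + 1) (a - α + 2) (by linarith) (by linarith) (by linarith) (by linarith)
  have e1' : ν (a + 1) / ν a = ν (J + a - 2 * α + 1) / ν (J + a - 2 * α) := by
    rw [show α + (a - α + 1) = a + 1 by ring, show a + 1 - 1 = a by ring,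
      show J - α + (a - α + 1) = J + a - 2 * α + 1 by ring,
      show J + a - 2 * α + 1 - 1 = J + a - 2 * α by ring] at e1
    exact e1
  have e2' : ν (a + 3) / ν (a + 2) = ν (J + a - 2 * α + 1) / ν (J + a - 2 * α) := by
    rw [show α + 1 + (a - α + 2) = a + 3 by ring, show a + 3 - 1 = a + 2 by ring,
      show J - (α + 1) + (a - α + 2) = J + a - 2 * α + 1 by ring,
      show J + a - 2 * α + 1 - 1 = J + a - 2 * α by ring] at e2
    exact e2
  exact e1'.trans e2'.symm
end

section
/- If η_n ∈ {r,...,J-r} and Y_{n-1} ∈ {r,...,K-r} for some r with 2r < min{J,K}, then the updated values stay in the same ranges: F^{(1)}_{J,K}(η_n, Y_{n-1}) ∈ {r,...,J-r} and F^{(2)}_{J,K}(η_n, Y_{n-1}) ∈ {r,...,K-r}. -/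
theorem F_range_preserved (J K r a b : ℤ) (hr : 0 ≤ r) (hmin : 2 * r < min J K)
    (har : r ≤ a) (haJ : a ≤ J - r) (hbr : r ≤ b) (hbK : b ≤ K - r) :
    (r ≤ F1 J K a b ∧ F1 J K a b ≤ J - r) ∧
    (r ≤ F2 J K a b ∧ F2 J K a b ≤ K - r) := by
  unfold F1 F2
  rcases le_total b (J - a) with h1 | h1 <;> rcases le_total a (K - b) with h2 | h2 <;>
    simp [min_eq_left, min_eq_right, *] <;> omega
end

section
/- Detailed balance solutions with full support are scaled-geometric consistent in ratios: if J < K are positive integers, μ on {0,...,J} and ν on {0,...,K} are strictly positive probability measures satisfying μ(a)/μ(0) = ν(a)/ν(0) for all 0 ≤ a ≤ J and ν(a)ν(b) = ν(J-a)ν(2a+b-J) whenever J ≤ a+b ≤ K (with a ≤ J, b ≤ K), and ν(a)ν(b) = ν(b+J-K)ν(a+K-J) whenever a+b ≥ K, then setting ℓ_a = ν(a+1)/ν(a) one has ℓ_a = ℓ_{J-a} for all a ∈ {0,...,J}. -/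
theorem detailed_balance_ratio_symmetry_general (J K : ℤ) (hJK : J < K)
    (ν : ℤ → ℝ)
    (hνpos : ∀ a, 0 ≤ a → a ≤ K → 0 < ν a)
    (h1 : ∀ a b, 0 ≤ a → a ≤ J → 0 ≤ b → b ≤ K → J ≤ a + b → a + b ≤ K →
      ν a * ν b = ν (J - a) * ν (2 * a + b - J)) :
    ∀ a, 0 ≤ a → a ≤ J → ν (a + 1) / ν a = ν (J - a + 1) / ν (J - a) := by
  intro a ha haJ
  -- `b = J - a + 1` puts `(a, b)` in the first regime, since `a + b = J + 1 ≤ K`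
  have hbalance : ν a * ν (J - a + 1) = ν (J - a) * ν (a + 1) := by
    have h := h1 a (J - a + 1) ha haJ (by omega) (by omega) (by omega) (by omega)
    rwa [show 2 * a + (J - a + 1) - J = a + 1 by ring] at h
  rw [div_eq_div_iff (hνpos a ha (by omega)).ne' (hνpos (J - a) (by omega) (by omega)).ne']
  linarith

theorem detailed_balance_ratio_symmetry (J K : ℤ) (hJ : 0 < J) (hJK : J < K)
    (μ ν : ℤ → ℝ)
    (hμpos : ∀ a, 0 ≤ a → a ≤ J → 0 < μ a)
    (hνpos : ∀ a, 0 ≤ a → a ≤ K → 0 < ν a)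
    (hμsum : ∑ a ∈ Finset.Icc (0 : ℤ) J, μ a = 1)
    (hνsum : ∑ a ∈ Finset.Icc (0 : ℤ) K, ν a = 1)
    (hratio : ∀ a, 0 ≤ a → a ≤ J → μ a / μ 0 = ν a / ν 0)
    (h1 : ∀ a b, 0 ≤ a → a ≤ J → 0 ≤ b → b ≤ K → J ≤ a + b → a + b ≤ K →
      ν a * ν b = ν (J - a) * ν (2 * a + b - J))
    (h2 : ∀ a b, 0 ≤ a → a ≤ J → 0 ≤ b → b ≤ K → K ≤ a + b →
      ν a * ν b = ν (b + J - K) * ν (a + K - J)) :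
    ∀ a, 0 ≤ a → a ≤ J → ν (a + 1) / ν a = ν (J - a + 1) / ν (J - a) :=
  detailed_balance_ratio_symmetry_general J K hJK ν hνpos h1
end
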